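/- arXiv:1207.4232 — 2 statements merged into one kernel-verified Lean document; each statement's English description precedes it below -/
import Mathlib

section
/- Let M be an n×n real matrix with ‖M − I_n‖₂ ≤ 1, and let k ≥ 1. Then ‖M ⊗ M ⊗ ⋯ ⊗ M − I_{n^k}‖₂ ≤ (2^k − 1)‖M − I_n‖₂, where the Kronecker product on the left is repeated k times and I_n, I_{n^k} denote the identity matrices of sizes n and n^k. -/
open scoped BigOperators Matrix

/-- The spectral norm (operator `2`-norm) of a real square matrix. -/
noncomputable def specNorm {ι : Type*} [Fintype ι] [DecidableEq ι]
    (A : Matrix ι ι ℝ) : ℝ :=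
  ‖Matrix.toEuclideanCLM (𝕜 := ℝ) A‖

/-- The `k`-fold Kronecker power of a matrix: rows and columns are indexed by tuples
`Fin k → Fin n`, with entries `∏ t, M (i t) (j t)`. -/
def kronPow {n : ℕ} (M : Matrix (Fin n) (Fin n) ℝ) (k : ℕ) :
    Matrix (Fin k → Fin n) (Fin k → Fin n) ℝ :=
  fun i j => ∏ t, M (i t) (j t)


lemma specNorm_nonneg {ι : Type*} [Fintype ι] [DecidableEq ι] (A : Matrix ι ι ℝ) :
    0 ≤ specNorm A := norm_nonneg _

lemma mulVec_sq_le {ι : Type*} [Fintype ι] [DecidableEq ι] (A : Matrix ι ι ℝ) (v : ι → ℝ) :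
    ∑ i, ((A *ᵥ v) i)^2 ≤ (specNorm A)^2 * ∑ i, (v i)^2 := by
  have h := (Matrix.toEuclideanCLM (𝕜 := ℝ) A).le_opNorm ((WithLp.equiv 2 (ι → ℝ)).symm v)
  rw [(show ∀ x, Matrix.toEuclideanCLM (𝕜 := ℝ) A ((WithLp.equiv 2 (ι → ℝ)).symm x) = (WithLp.equiv 2 (ι → ℝ)).symm (Matrix.toLin' A x) from fun _ => rfl)] at h
  rw [EuclideanSpace.norm_eq, EuclideanSpace.norm_eq] at h
  simp only [WithLp.equiv_symm_apply, PiLp.toLp_apply, Real.norm_eq_abs, sq_abs, Matrix.toLin'_apply] at h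
  have h1 : (0:ℝ) ≤ ∑ i, ((A *ᵥ v) i)^2 := Finset.sum_nonneg fun i _ => sq_nonneg _
  have h2 : (0:ℝ) ≤ ∑ i, (v i)^2 := Finset.sum_nonneg fun i _ => sq_nonneg _
  calc ∑ i, ((A *ᵥ v) i)^2 = (Real.sqrt (∑ i, ((A *ᵥ v) i)^2))^2 := (Real.sq_sqrt h1).symm
    _ ≤ (specNorm A * Real.sqrt (∑ i, (v i)^2))^2 := by
        apply pow_le_pow_left₀ (Real.sqrt_nonneg _) h
    _ = (specNorm A)^2 * ∑ i, (v i)^2 := by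
        rw [mul_pow, Real.sq_sqrt h2]

lemma id_tensor_le {κ μ ι : Type*} [Fintype κ] [DecidableEq κ] [Fintype μ] [DecidableEq μ]
    [Fintype ι] [DecidableEq ι] (e : κ ≃ μ × ι) (B : Matrix ι ι ℝ) :
    specNorm (Matrix.of fun a b =>
      (if (e a).1 = (e b).1 then (1:ℝ) else 0) * B (e a).2 (e b).2) ≤ specNorm B := by
  set T : Matrix κ κ ℝ := Matrix.of fun a b =>
      (if (e a).1 = (e b).1 then (1:ℝ) else 0) * B (e a).2 (e b).2 with hT
  show ‖Matrix.toEuclideanCLM (𝕜 := ℝ) T‖ ≤ specNorm B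
  apply ContinuousLinearMap.opNorm_le_bound _ (specNorm_nonneg B)
  intro x
  set y : κ → ℝ := WithLp.equiv 2 (κ → ℝ) x with hy
  have hx : x = (WithLp.equiv 2 (κ → ℝ)).symm y := rfl
  rw [hx, (show ∀ x, Matrix.toEuclideanCLM (𝕜 := ℝ) T ((WithLp.equiv 2 (κ → ℝ)).symm x) = (WithLp.equiv 2 (κ → ℝ)).symm (Matrix.toLin' T x) from fun _ => rfl), Matrix.toLin'_apply]
  rw [EuclideanSpace.norm_eq, EuclideanSpace.norm_eq]
  simp only [WithLp.equiv_symm_apply, PiLp.toLp_apply, Real.norm_eq_abs, sq_abs]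
  -- key entrywise computation
  have hmv : ∀ a : κ, (T *ᵥ y) a = (B *ᵥ fun i => y (e.symm ((e a).1, i))) ((e a).2) := by
    intro a
    rw [Matrix.mulVec, dotProduct]
    rw [← e.symm.sum_comp, Fintype.sum_prod_type]
    rw [Matrix.mulVec, dotProduct]
    rw [Finset.sum_comm]
    simp only [hT, Matrix.of_apply, Equiv.apply_symm_apply, ite_mul, one_mul, zero_mul]
    rw [Finset.sum_congr rfl (fun i _ => Finset.sum_ite_eq (Finset.univ : Finset μ) (e a).1
      (fun m => B (e a).2 i * y (e.symm (m, i))))]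
    simp [mul_comm]
  have hsum : ∑ a, ((T *ᵥ y) a)^2 ≤ (specNorm B)^2 * ∑ a, (y a)^2 := by
    calc ∑ a, ((T *ᵥ y) a)^2
        = ∑ p : μ × ι, ((T *ᵥ y) (e.symm p))^2 := (e.symm.sum_comp _).symm
      _ = ∑ m, ∑ i, ((B *ᵥ fun i' => y (e.symm (m, i'))) i)^2 := by
          rw [Fintype.sum_prod_type]
          refine Finset.sum_congr rfl fun m _ => Finset.sum_congr rfl fun i _ => ?_
          rw [hmv]; simp
      _ ≤ ∑ m, (specNorm B)^2 * ∑ i, (y (e.symm (m, i)))^2 := by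
          exact Finset.sum_le_sum fun m _ => mulVec_sq_le B _
      _ = (specNorm B)^2 * ∑ p : μ × ι, (y (e.symm p))^2 := by
          rw [← Finset.mul_sum, Fintype.sum_prod_type]
      _ = (specNorm B)^2 * ∑ a, (y a)^2 := by rw [e.symm.sum_comp (fun a => (y a)^2)]
  calc Real.sqrt (∑ a, ((T *ᵥ y) a)^2) ≤ Real.sqrt ((specNorm B)^2 * ∑ a, (y a)^2) :=
        Real.sqrt_le_sqrt hsum
    _ = specNorm B * Real.sqrt (∑ a, (y a)^2) := by
        rw [Real.sqrt_mul (sq_nonneg _), Real.sqrt_sq (specNorm_nonneg B)]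

lemma tensor_id_le {κ μ ι : Type*} [Fintype κ] [DecidableEq κ] [Fintype μ] [DecidableEq μ]
    [Fintype ι] [DecidableEq ι] (e : κ ≃ μ × ι) (A : Matrix μ μ ℝ) :
    specNorm (Matrix.of fun a b =>
      A (e a).1 (e b).1 * (if (e a).2 = (e b).2 then (1:ℝ) else 0)) ≤ specNorm A := by
  have h := id_tensor_le (e.trans (Equiv.prodComm μ ι)) A
  have heq : (Matrix.of fun a b =>
      A (e a).1 (e b).1 * (if (e a).2 = (e b).2 then (1:ℝ) else 0)) =
      (Matrix.of fun a b =>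
      (if ((e.trans (Equiv.prodComm μ ι)) a).1 = ((e.trans (Equiv.prodComm μ ι)) b).1
        then (1:ℝ) else 0) *
        A ((e.trans (Equiv.prodComm μ ι)) a).2 ((e.trans (Equiv.prodComm μ ι)) b).2) := by
    funext a b
    simp [Equiv.trans_apply, Equiv.prodComm_apply, mul_comm]
    by_cases hc : (e a).2 = (e b).2 <;> simp [hc]
  rw [heq]; exact h

lemma tensor_le {κ μ ι : Type*} [Fintype κ] [DecidableEq κ] [Fintype μ] [DecidableEq μ]
    [Fintype ι] [DecidableEq ι] (e : κ ≃ μ × ι) (A : Matrix μ μ ℝ) (B : Matrix ι ι ℝ) :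
    specNorm (Matrix.of fun a b => A (e a).1 (e b).1 * B (e a).2 (e b).2) ≤
      specNorm A * specNorm B := by
  have hfac : (Matrix.of fun a b => A (e a).1 (e b).1 * B (e a).2 (e b).2) =
      (Matrix.of fun a b => A (e a).1 (e b).1 * (if (e a).2 = (e b).2 then (1:ℝ) else 0)) *
      (Matrix.of fun a b => (if (e a).1 = (e b).1 then (1:ℝ) else 0) * B (e a).2 (e b).2) := by
    funext a b
    rw [Matrix.mul_apply]
    rw [← e.symm.sum_comp, Fintype.sum_prod_type]
    simp only [Matrix.of_apply, Equiv.apply_symm_apply]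
    rw [Finset.sum_comm]
    simp [Finset.mul_sum, mul_assoc, Finset.sum_ite_eq, Finset.sum_ite_eq',
      mul_ite, ite_mul, mul_zero, zero_mul, mul_one, one_mul]
  rw [hfac]
  calc specNorm (_ * _) ≤ specNorm _ * specNorm _ := by
        unfold specNorm; rw [map_mul]; exact norm_mul_le _ _
    _ ≤ specNorm A * specNorm B :=
        mul_le_mul (tensor_id_le e A) (id_tensor_le e B) (specNorm_nonneg _) (specNorm_nonneg _)

def splitEquiv (n k : ℕ) : (Fin (k+1) → Fin n) ≃ Fin n × (Fin k → Fin n) where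
  toFun f := (f 0, fun t => f t.succ)
  invFun p := Fin.cons p.1 p.2
  left_inv f := by
    funext t
    refine Fin.cases ?_ ?_ t <;> simp
  right_inv p := by simp

lemma specNorm_add_le {ι : Type*} [Fintype ι] [DecidableEq ι] (A B : Matrix ι ι ℝ) :
    specNorm (A + B) ≤ specNorm A + specNorm B := by
  unfold specNorm; rw [map_add]; exact norm_add_le _ _

lemma specNorm_one_le {ι : Type*} [Fintype ι] [DecidableEq ι] :
    specNorm (1 : Matrix ι ι ℝ) ≤ 1 := by
  unfold specNorm
  rw [map_one, ContinuousLinearMap.one_def]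
  exact ContinuousLinearMap.norm_id_le

/-- If `‖M − I‖₂ ≤ 1` then the `k`-fold Kronecker power satisfies
`‖M ⊗ ⋯ ⊗ M − I‖₂ ≤ (2^k − 1)‖M − I‖₂`. -/
theorem kron_pow_id_diff_bound {n : ℕ} (M : Matrix (Fin n) (Fin n) ℝ) (k : ℕ)
    (hk : 1 ≤ k) (hM : specNorm (M - 1) ≤ 1) :
    specNorm (kronPow M k - 1) ≤ (2 ^ k - 1) * specNorm (M - 1) := by
  clear hk
  set ε := specNorm (M - 1) with hε
  have hε0 : 0 ≤ ε := specNorm_nonneg _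
  induction k with
  | zero =>
    have h0 : kronPow M 0 - 1 = 0 := by
      funext i j
      simp [kronPow, Matrix.one_apply, Subsingleton.elim i j]
    rw [h0]
    have : specNorm (0 : Matrix (Fin 0 → Fin n) (Fin 0 → Fin n) ℝ) = 0 := by
      unfold specNorm; rw [map_zero, norm_zero]
    rw [this]; norm_num
  | succ k ih =>
    set e := splitEquiv n k
    set D := kronPow M k with hD
    have hsplit : kronPow M (k+1) - 1 =
        (Matrix.of fun a b => (M - 1) (e a).1 (e b).1 * D (e a).2 (e b).2) +
        (Matrix.of fun a b =>
          (if (e a).1 = (e b).1 then (1:ℝ) else 0) * (D - 1) (e a).2 (e b).2) := by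
      funext a b
      have hk1 : kronPow M (k+1) a b = M (e a).1 (e b).1 * D (e a).2 (e b).2 := by
        simp only [kronPow, hD]
        rw [Fin.prod_univ_succ]
        rfl
      have hdelta : (if (e a).1 = (e b).1 then (1:ℝ) else 0) *
          (if (e a).2 = (e b).2 then (1:ℝ) else 0) = if a = b then (1:ℝ) else 0 := by
        by_cases h : a = b
        · simp [h]
        · rw [if_neg h]
          by_cases h1 : (e a).1 = (e b).1
          · rw [if_pos h1, if_neg fun h2 => h (e.injective (Prod.ext h1 h2)), mul_zero]
          · rw [if_neg h1, zero_mul]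
      simp only [Matrix.sub_apply, Matrix.add_apply, Matrix.of_apply, Matrix.one_apply, hk1]
      rw [← hdelta]
      ring
    have hDnorm : specNorm D ≤ 2 ^ k := by
      have h1 : D = (D - 1) + 1 := by abel
      calc specNorm D = specNorm ((D - 1) + 1) := by rw [← h1]
        _ ≤ specNorm (D - 1) + specNorm (1 : Matrix (Fin k → Fin n) (Fin k → Fin n) ℝ) :=
            specNorm_add_le _ _
        _ ≤ (2 ^ k - 1) * ε + 1 := add_le_add ih specNorm_one_le
        _ ≤ 2 ^ k := by
            have h2 : (1:ℝ) ≤ 2 ^ k := one_le_pow₀ (by norm_num)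
            nlinarith
    calc specNorm (kronPow M (k+1) - 1)
        ≤ specNorm (Matrix.of fun a b => (M - 1) (e a).1 (e b).1 * D (e a).2 (e b).2) +
          specNorm (Matrix.of fun a b =>
            (if (e a).1 = (e b).1 then (1:ℝ) else 0) * (D - 1) (e a).2 (e b).2) := by
          rw [hsplit]; exact specNorm_add_le _ _
      _ ≤ ε * specNorm D + specNorm (D - 1) :=
          add_le_add (tensor_le e (M - 1) D) (id_tensor_le e (D - 1))
      _ ≤ ε * 2 ^ k + (2 ^ k - 1) * ε := add_le_add (by nlinarith) ih
      _ = (2 ^ (k+1) - 1) * ε := by ring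
end

section
/- Let G : ℝⁿ → ℝⁿ have component functions with continuous partial derivatives up to order k in a neighborhood of x̄ ∈ ℝⁿ, and let Ṽ and V̂ be orthogonal n×n matrices with ‖V̂ᵀṼ − I‖₂ ≤ 1. Define G̃(ξ) = Ṽᵀ G(x̄ + Ṽξ) and Ĝ(ξ) = V̂ᵀ G(x̄ + V̂ξ). Then for every choice of indices j_1,…,j_k ∈ {1,…,n}: ‖∂^k G̃/∂ξ_{j_1}⋯∂ξ_{j_k}(0) − ∂^k Ĝ/∂ξ_{j_1}⋯∂ξ_{j_k}(0)‖₂ ≤ 2^k · n^{1/2} · max_{1 ≤ ℓ ≤ n} ‖D^k G_ℓ(x̄)‖₂ · ‖V̂ᵀṼ − I‖₂. -/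
open scoped BigOperators Matrix

set_option synthInstance.maxHeartbeats 1000000
set_option maxHeartbeats 3200000

/-- The Euclidean norm of the length-`n^k` vector of all `k`-th order mixed partial
derivatives of `s` at `x` (listed with multiplicity, in Kronecker order). -/
noncomputable def dkNorm (n k : ℕ) (s : EuclideanSpace ℝ (Fin n) → ℝ)
    (x : EuclideanSpace ℝ (Fin n)) : ℝ :=
  Real.sqrt (∑ i : Fin k → Fin n,
    (iteratedFDeriv ℝ k s x (fun t => EuclideanSpace.single (i t) 1)) ^ 2)

section Aux

variable {E F : Type*} [NormedAddCommGroup E] [NormedSpace ℝ E]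
  [NormedAddCommGroup F] [NormedSpace ℝ F]

private lemma fderiv_comp_const_add' (f : E → F) (a x : E) :
    fderiv ℝ (fun y => f (a + y)) x = fderiv ℝ f (a + x) := by
  by_cases h : DifferentiableAt ℝ f (a + x)
  · have h1 : HasFDerivAt (fun y => f (a + y)) (fderiv ℝ f (a + x)) x := by
      have h2 : HasFDerivAt (fun y : E => a + y) (ContinuousLinearMap.id ℝ E) x :=
        (hasFDerivAt_id x).const_add a
      exact (h.hasFDerivAt.comp x h2).congr_fderiv (ContinuousLinearMap.comp_id _)
    exact h1.fderiv
  · rw [fderiv_zero_of_not_differentiableAt h, fderiv_zero_of_not_differentiableAt]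
    intro hc
    apply h
    have h4 : DifferentiableAt ℝ (fun z : E => -a + z) (a + x) :=
      (differentiable_id.const_add (-a)) _
    have hx' : x = -a + (a + x) := by abel
    rw [hx'] at hc
    have h3 := DifferentiableAt.comp (a + x) hc h4
    simpa only [Function.comp_def, add_neg_cancel_left] using h3

private lemma iteratedFDeriv_comp_const_add' (i : ℕ) (f : E → F) (a : E) :
    ∀ x, iteratedFDeriv ℝ i (fun y => f (a + y)) x = iteratedFDeriv ℝ i f (a + x) := by
  induction i with
  | zero => intro x; ext m; simp
  | succ i IH =>
    intro x
    ext m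
    rw [iteratedFDeriv_succ_apply_left, iteratedFDeriv_succ_apply_left,
      show iteratedFDeriv ℝ i (fun y => f (a + y)) = fun y => iteratedFDeriv ℝ i f (a + y)
        from funext IH,
      fderiv_comp_const_add' (iteratedFDeriv ℝ i f) a x]

end Aux

section MatrixAux

variable {n : ℕ}

private lemma star_eq_transpose' (A : Matrix (Fin n) (Fin n) ℝ) : star A = Aᵀ := by
  ext i j
  simp [Matrix.star_eq_conjTranspose, Matrix.conjTranspose_apply]

private lemma clm_norm_map {A : Matrix (Fin n) (Fin n) ℝ} (hA : Aᵀ * A = 1)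
    (x : EuclideanSpace ℝ (Fin n)) : ‖Matrix.toEuclideanCLM (𝕜 := ℝ) A x‖ = ‖x‖ := by
  set a := Matrix.toEuclideanCLM (𝕜 := ℝ) A with ha
  have hs : star a * a = 1 := by
    rw [ha, ← map_star, ← map_mul, star_eq_transpose', hA, map_one]
  have hinner : (inner ℝ (a x) (a x) : ℝ) = inner ℝ x x := by
    have h1 : (inner ℝ (a x) (a x) : ℝ) = inner ℝ x ((star a * a) x) := by
      rw [ContinuousLinearMap.mul_apply, ContinuousLinearMap.star_eq_adjoint,
        ContinuousLinearMap.adjoint_inner_right]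
    rw [h1, hs, ContinuousLinearMap.one_apply]
  have h2 : ‖a x‖ ^ 2 = ‖x‖ ^ 2 := by
    rw [← real_inner_self_eq_norm_sq, ← real_inner_self_eq_norm_sq, hinner]
  have := congrArg Real.sqrt h2
  simpa [Real.sqrt_sq, norm_nonneg] using this

private lemma clm_norm_star (A : Matrix (Fin n) (Fin n) ℝ) :
    ‖Matrix.toEuclideanCLM (𝕜 := ℝ) Aᵀ‖ = ‖Matrix.toEuclideanCLM (𝕜 := ℝ) A‖ := by
  rw [← star_eq_transpose', map_star, ContinuousLinearMap.star_eq_adjoint]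
  exact (ContinuousLinearMap.adjoint :
    (EuclideanSpace ℝ (Fin n) →L[ℝ] EuclideanSpace ℝ (Fin n)) ≃ₗᵢ⋆[ℝ] _).norm_map _

private lemma euclid_decomp (x : EuclideanSpace ℝ (Fin n)) :
    x = ∑ j : Fin n, x j • EuclideanSpace.single j 1 := by
  ext ℓ
  rw [WithLp.ofLp_sum, Finset.sum_apply]
  simp [EuclideanSpace.single_apply, Finset.sum_ite_eq', mul_comm]

private lemma euclid_normsq (x : EuclideanSpace ℝ (Fin n)) :
    ‖x‖ ^ 2 = ∑ j : Fin n, x j ^ 2 := by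
  rw [EuclideanSpace.norm_eq, Real.sq_sqrt (by positivity)]
  simp [Real.norm_eq_abs, sq_abs]

end MatrixAux

private lemma multilinear_expand {n k : ℕ}
    (P : ContinuousMultilinearMap ℝ (fun _ : Fin k => EuclideanSpace ℝ (Fin n))
      (EuclideanSpace ℝ (Fin n))) (u : Fin k → EuclideanSpace ℝ (Fin n)) :
    P u = ∑ r : Fin k → Fin n, (∏ t, u t (r t)) •
      P (fun t => EuclideanSpace.single (r t) 1) := by
  have h1 : P u = P (fun t => ∑ j : Fin n, u t j • EuclideanSpace.single j 1) := by
    congr 1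
    funext t
    exact euclid_decomp (u t)
  rw [h1]
  rw [P.map_sum (g := fun t j => u t j • EuclideanSpace.single j 1)]
  congr 1
  funext r
  exact P.map_smul_univ (fun t => u t (r t))
    (fun t => EuclideanSpace.single (r t) 1)

private lemma pnorm_bound {n k : ℕ}
    (P : ContinuousMultilinearMap ℝ (fun _ : Fin k => EuclideanSpace ℝ (Fin n))
      (EuclideanSpace ℝ (Fin n))) (S : ℝ) (hS : 0 ≤ S)
    (hcomp : ∀ ℓ : Fin n,
      ∑ r : Fin k → Fin n, (P (fun t => EuclideanSpace.single (r t) 1) ℓ) ^ 2 ≤ S ^ 2)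
    (u : Fin k → EuclideanSpace ℝ (Fin n)) :
    ‖P u‖ ≤ Real.sqrt n * S * ∏ t, ‖u t‖ := by
  have hcoord : ∀ ℓ : Fin n, P u ℓ
      = ∑ r : Fin k → Fin n, (∏ t, u t (r t)) * (P (fun t => EuclideanSpace.single (r t) 1) ℓ) := by
    intro ℓ
    rw [multilinear_expand P u, WithLp.ofLp_sum, Finset.sum_apply]
    rfl
  have hprodsum : ∑ r : Fin k → Fin n, ∏ t, (u t (r t)) ^ 2 = ∏ t, ‖u t‖ ^ 2 := by
    rw [show (∏ t, ‖u t‖ ^ 2) = ∏ t, ∑ j : Fin n, (u t j) ^ 2 by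
      exact Finset.prod_congr rfl fun t _ => euclid_normsq (u t)]
    rw [Finset.prod_univ_sum]
    rw [Fintype.piFinset_univ]
  have hsq : ∀ ℓ : Fin n, (P u ℓ) ^ 2 ≤ (∏ t, ‖u t‖ ^ 2) * S ^ 2 := by
    intro ℓ
    rw [hcoord ℓ]
    calc (∑ r : Fin k → Fin n, (∏ t, u t (r t)) *
            (P (fun t => EuclideanSpace.single (r t) 1) ℓ)) ^ 2
        ≤ (∑ r : Fin k → Fin n, (∏ t, u t (r t)) ^ 2) *
            (∑ r : Fin k → Fin n, (P (fun t => EuclideanSpace.single (r t) 1) ℓ) ^ 2) :=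
          Finset.sum_mul_sq_le_sq_mul_sq _ _ _
      _ ≤ (∏ t, ‖u t‖ ^ 2) * S ^ 2 := by
          have h' : (∑ r : Fin k → Fin n, (∏ t, u t (r t)) ^ 2 : ℝ) = ∏ t, ‖u t‖ ^ 2 := by
            simp_rw [← Finset.prod_pow]
            exact hprodsum
          rw [h']
          exact mul_le_mul_of_nonneg_left (hcomp ℓ) (by positivity)
  have hnormsq : ‖P u‖ ^ 2 ≤ (n : ℝ) * ((∏ t, ‖u t‖ ^ 2) * S ^ 2) := by
    rw [euclid_normsq]
    calc ∑ ℓ : Fin n, (P u ℓ) ^ 2 ≤ ∑ _ℓ : Fin n, (∏ t, ‖u t‖ ^ 2) * S ^ 2 :=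
          Finset.sum_le_sum fun ℓ _ => hsq ℓ
      _ = (n : ℝ) * ((∏ t, ‖u t‖ ^ 2) * S ^ 2) := by
          rw [Finset.sum_const, Finset.card_univ, Fintype.card_fin, nsmul_eq_mul]
  have hR : (0 : ℝ) ≤ Real.sqrt n * S * ∏ t, ‖u t‖ := by positivity
  have hexp : (Real.sqrt n * S * ∏ t, ‖u t‖) ^ 2 = (n : ℝ) * ((∏ t, ‖u t‖ ^ 2) * S ^ 2) := by
    rw [mul_pow, mul_pow, Real.sq_sqrt (by positivity), ← Finset.prod_pow]
    ring
  have h2 : ‖P u‖ ^ 2 ≤ (Real.sqrt n * S * ∏ t, ‖u t‖) ^ 2 := by rw [hexp]; exact hnormsq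
  calc ‖P u‖ = Real.sqrt (‖P u‖ ^ 2) := (Real.sqrt_sq (norm_nonneg _)).symm
    _ ≤ Real.sqrt ((Real.sqrt n * S * ∏ t, ‖u t‖) ^ 2) := Real.sqrt_le_sqrt h2
    _ = _ := Real.sqrt_sq hR

private lemma master (n k : ℕ) (G : EuclideanSpace ℝ (Fin n) → EuclideanSpace ℝ (Fin n))
    (xb : EuclideanSpace ℝ (Fin n)) (U : Set (EuclideanSpace ℝ (Fin n)))
    (hU : IsOpen U) (hxU : xb ∈ U) (hG : ContDiffOn ℝ k G U)
    (V : Matrix (Fin n) (Fin n) ℝ) (v : Fin k → EuclideanSpace ℝ (Fin n)) :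
    iteratedFDeriv ℝ k
      (fun ξ => Matrix.toEuclideanLin Vᵀ (G (xb + Matrix.toEuclideanLin V ξ))) 0 v
    = Matrix.toEuclideanCLM (𝕜 := ℝ) Vᵀ (iteratedFDeriv ℝ k G xb
        (fun t => Matrix.toEuclideanCLM (𝕜 := ℝ) V (v t))) := by
  set c := Matrix.toEuclideanCLM (𝕜 := ℝ) V with hc
  set cT := Matrix.toEuclideanCLM (𝕜 := ℝ) Vᵀ with hcT
  set h : EuclideanSpace ℝ (Fin n) → EuclideanSpace ℝ (Fin n) := fun y => G (xb + y) with hh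
  set s₁ : Set (EuclideanSpace ℝ (Fin n)) := (fun y => xb + y) ⁻¹' U with hs₁
  have hs₁o : IsOpen s₁ := hU.preimage (continuous_const.add continuous_id)
  have h0s₁ : (0 : EuclideanSpace ℝ (Fin n)) ∈ s₁ := by simp [hs₁, hxU]
  have hhC : ContDiffOn ℝ k h s₁ :=
    hG.comp ((contDiff_const.add contDiff_id).contDiffOn) (fun x hx => hx)
  have hWo : IsOpen (c ⁻¹' s₁) := hs₁o.preimage c.continuous
  have h0W : (0 : EuclideanSpace ℝ (Fin n)) ∈ c ⁻¹' s₁ := by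
    simp only [Set.mem_preimage, map_zero]; exact h0s₁
  have hgC : ContDiffOn ℝ k (h ∘ c) (c ⁻¹' s₁) :=
    hhC.comp_continuousLinearMap c
  have hF : (fun ξ => Matrix.toEuclideanLin Vᵀ (G (xb + Matrix.toEuclideanLin V ξ)))
      = cT ∘ (h ∘ c) := rfl
  rw [hF, ← iteratedFDerivWithin_of_isOpen k hWo h0W,
    cT.iteratedFDerivWithin_comp_left (hgC 0 h0W) hWo.uniqueDiffOn h0W le_rfl]
  simp only [ContinuousLinearMap.compContinuousMultilinearMap_coe, Function.comp_apply]
  congr 1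
  rw [c.iteratedFDerivWithin_comp_right hhC hs₁o.uniqueDiffOn hWo.uniqueDiffOn
    (by rw [map_zero]; exact h0s₁) le_rfl]
  simp only [ContinuousMultilinearMap.compContinuousLinearMap_apply]
  rw [map_zero, iteratedFDerivWithin_of_isOpen k hs₁o h0s₁]
  have := iteratedFDeriv_comp_const_add' k G xb 0
  rw [hh, this, add_zero]

/-- Bound on the difference of `k`-th partial derivatives of the transformed vector
field `G̃(ξ) = Ṽᵀ G(x̄ + Ṽξ)` versus `Ĝ(ξ) = V̂ᵀ G(x̄ + V̂ξ)` under two orthogonal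
changes of variables:
`‖∂ᵏG̃(0) − ∂ᵏĜ(0)‖₂ ≤ 2ᵏ √n maxₗ ‖DᵏGₗ(x̄)‖₂ ‖V̂ᵀṼ − I‖₂`. -/
theorem vector_field_partials_change_of_coords_diff (n k : ℕ)
    (G : EuclideanSpace ℝ (Fin n) → EuclideanSpace ℝ (Fin n))
    (xb : EuclideanSpace ℝ (Fin n))
    (U : Set (EuclideanSpace ℝ (Fin n))) (hU : IsOpen U) (hxU : xb ∈ U)
    (hG : ContDiffOn ℝ k G U)
    (Vt Vh : Matrix (Fin n) (Fin n) ℝ)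
    (hVt : Vtᵀ * Vt = 1) (hVh : Vhᵀ * Vh = 1)
    (hclose : specNorm (Vhᵀ * Vt - 1) ≤ 1) :
    ∀ j : Fin k → Fin n,
      ‖iteratedFDeriv ℝ k
          (fun ξ => Matrix.toEuclideanLin Vtᵀ (G (xb + Matrix.toEuclideanLin Vt ξ))) 0
          (fun t => EuclideanSpace.single (j t) 1)
        - iteratedFDeriv ℝ k
          (fun ξ => Matrix.toEuclideanLin Vhᵀ (G (xb + Matrix.toEuclideanLin Vh ξ))) 0
          (fun t => EuclideanSpace.single (j t) 1)‖
      ≤ 2 ^ k * Real.sqrt n * (⨆ ℓ : Fin n, dkNorm n k (fun y => G y ℓ) xb)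
          * specNorm (Vhᵀ * Vt - 1) := by
  intro j
  by_cases hn : n = 0
  · subst hn
    have h0 : ∀ x : EuclideanSpace ℝ (Fin 0), x = 0 := fun x => by ext i; exact i.elim0
    rw [h0 (_ - _), norm_zero]
    have hs : Real.sqrt ((0 : ℕ) : ℝ) = 0 := by norm_num
    rw [hs]
    simp
  · have hnpos : 0 < n := Nat.pos_of_ne_zero hn
    haveI : Nonempty (Fin n) := ⟨⟨0, hnpos⟩⟩
    set P := iteratedFDeriv ℝ k G xb with hPdef
    set S := ⨆ ℓ : Fin n, dkNorm n k (fun y => G y ℓ) xb with hSdef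
    set D := Vhᵀ * Vt - 1 with hD
    have hspec : specNorm D = ‖Matrix.toEuclideanCLM (𝕜 := ℝ) D‖ := rfl
    have hδ0 : 0 ≤ specNorm D := by rw [hspec]; exact norm_nonneg _
    have hVtT : Vt * Vtᵀ = 1 := mul_eq_one_comm.mp hVt
    have hVhT : Vh * Vhᵀ = 1 := mul_eq_one_comm.mp hVh
    have hVtT' : (Vtᵀ)ᵀ * Vtᵀ = 1 := by rw [Matrix.transpose_transpose]; exact hVtT
    have hVhT' : (Vhᵀ)ᵀ * Vhᵀ = 1 := by rw [Matrix.transpose_transpose]; exact hVhT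
    -- component identity
    have hcomp_eq : ∀ (v : Fin k → EuclideanSpace ℝ (Fin n)) (ℓ : Fin n),
        iteratedFDeriv ℝ k (fun y => G y ℓ) xb v = P v ℓ := by
      intro v ℓ
      have hfun : (fun y => G y ℓ) = (EuclideanSpace.proj (𝕜 := ℝ) ℓ) ∘ G := rfl
      rw [hPdef, hfun,
        ← iteratedFDerivWithin_of_isOpen (f := (EuclideanSpace.proj (𝕜 := ℝ) ℓ) ∘ G) k hU hxU,
        (EuclideanSpace.proj (𝕜 := ℝ) ℓ).iteratedFDerivWithin_comp_left (hG xb hxU)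
          hU.uniqueDiffOn hxU le_rfl]
      simp only [ContinuousLinearMap.compContinuousMultilinearMap_coe, Function.comp_apply]
      rw [iteratedFDerivWithin_of_isOpen (f := G) k hU hxU]
      rfl
    have hbdd : BddAbove (Set.range fun ℓ : Fin n => dkNorm n k (fun y => G y ℓ) xb) :=
      Set.Finite.bddAbove (Set.finite_range _)
    have hMle : ∀ ℓ, dkNorm n k (fun y => G y ℓ) xb ≤ S := fun ℓ => le_ciSup hbdd ℓ
    have hM0 : ∀ ℓ : Fin n, 0 ≤ dkNorm n k (fun y => G y ℓ) xb := fun ℓ => Real.sqrt_nonneg _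
    have hS0 : 0 ≤ S := le_trans (hM0 ⟨0, hnpos⟩) (hMle _)
    have hcomp : ∀ ℓ : Fin n,
        ∑ r : Fin k → Fin n, (P (fun t => EuclideanSpace.single (r t) 1) ℓ) ^ 2 ≤ S ^ 2 := by
      intro ℓ
      have he : (dkNorm n k (fun y => G y ℓ) xb) ^ 2
          = ∑ r : Fin k → Fin n, (P (fun t => EuclideanSpace.single (r t) 1) ℓ) ^ 2 := by
        unfold dkNorm
        rw [Real.sq_sqrt (by positivity)]
        exact Finset.sum_congr rfl fun r _ => by rw [hcomp_eq]
      rw [← he]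
      exact pow_le_pow_left₀ (hM0 ℓ) (hMle ℓ) 2
    have hA0 : (0 : ℝ) ≤ Real.sqrt n * S := mul_nonneg (Real.sqrt_nonneg _) hS0
    have hPu : ∀ u, ‖P u‖ ≤ Real.sqrt n * S * ∏ t, ‖u t‖ :=
      fun u => pnorm_bound P S hS0 hcomp u
    have hPnorm : ‖P‖ ≤ Real.sqrt n * S := P.opNorm_le_bound hA0 hPu
    set u1 : Fin k → EuclideanSpace ℝ (Fin n) :=
      fun t => Matrix.toEuclideanCLM (𝕜 := ℝ) Vt (EuclideanSpace.single (j t) 1) with hu1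
    set u2 : Fin k → EuclideanSpace ℝ (Fin n) :=
      fun t => Matrix.toEuclideanCLM (𝕜 := ℝ) Vh (EuclideanSpace.single (j t) 1) with hu2
    rw [master n k G xb U hU hxU hG Vt (fun t => EuclideanSpace.single (j t) 1),
      master n k G xb U hU hxU hG Vh (fun t => EuclideanSpace.single (j t) 1)]
    have hnorm1 : ∀ t, ‖u1 t‖ = 1 := fun t => by
      rw [hu1, clm_norm_map hVt, EuclideanSpace.norm_single, norm_one]
    have hnorm2 : ∀ t, ‖u2 t‖ = 1 := fun t => by
      rw [hu2, clm_norm_map hVh, EuclideanSpace.norm_single, norm_one]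
    have hdiffcol : ∀ t, ‖u1 t - u2 t‖ ≤ specNorm D := by
      intro t
      have hmat : Vt - Vh = Vh * D := by
        rw [hD, Matrix.mul_sub, Matrix.mul_one, ← Matrix.mul_assoc, hVhT, Matrix.one_mul]
      have h1 : u1 t - u2 t
          = Matrix.toEuclideanCLM (𝕜 := ℝ) (Vh * D) (EuclideanSpace.single (j t) 1) := by
        rw [← hmat, map_sub, ContinuousLinearMap.sub_apply]
      rw [h1, map_mul, ContinuousLinearMap.mul_apply, clm_norm_map hVh]
      refine le_trans ((Matrix.toEuclideanCLM (𝕜 := ℝ) D).le_opNorm _) ?_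
      rw [EuclideanSpace.norm_single, norm_one, mul_one, hspec]
    have hTdiff : ∀ w : EuclideanSpace ℝ (Fin n),
        ‖Matrix.toEuclideanCLM (𝕜 := ℝ) Vtᵀ w - Matrix.toEuclideanCLM (𝕜 := ℝ) Vhᵀ w‖
          ≤ specNorm D * ‖w‖ := by
      intro w
      have hmat : Vtᵀ - Vhᵀ = Dᵀ * Vhᵀ := by
        rw [hD, Matrix.transpose_sub, Matrix.transpose_mul, Matrix.transpose_transpose,
          Matrix.transpose_one, Matrix.sub_mul, Matrix.one_mul, Matrix.mul_assoc, hVhT,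
          Matrix.mul_one]
      have h1 : Matrix.toEuclideanCLM (𝕜 := ℝ) Vtᵀ w - Matrix.toEuclideanCLM (𝕜 := ℝ) Vhᵀ w
          = Matrix.toEuclideanCLM (𝕜 := ℝ) Dᵀ (Matrix.toEuclideanCLM (𝕜 := ℝ) Vhᵀ w) := by
        rw [← ContinuousLinearMap.mul_apply, ← map_mul, ← hmat, map_sub,
          ContinuousLinearMap.sub_apply]
      rw [h1]
      refine le_trans ((Matrix.toEuclideanCLM (𝕜 := ℝ) Dᵀ).le_opNorm _) ?_
      rw [clm_norm_map hVhT', clm_norm_star, hspec]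
    have hu1n : ‖u1‖ ≤ 1 := (pi_norm_le_iff_of_nonneg zero_le_one).mpr
      (fun t => le_of_eq (hnorm1 t))
    have hu2n : ‖u2‖ ≤ 1 := (pi_norm_le_iff_of_nonneg zero_le_one).mpr
      (fun t => le_of_eq (hnorm2 t))
    have hdn : ‖u1 - u2‖ ≤ specNorm D := (pi_norm_le_iff_of_nonneg hδ0).mpr
      (fun t => hdiffcol t)
    have hmax1 : max ‖u1‖ ‖u2‖ ^ (k - 1) ≤ 1 :=
      pow_le_one₀ ((norm_nonneg u1).trans (le_max_left _ _)) (max_le hu1n hu2n)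
    have hsub : ‖P u1 - P u2‖ ≤ Real.sqrt n * S * k * specNorm D := by
      have him := P.norm_image_sub_le u1 u2
      calc ‖P u1 - P u2‖
          ≤ ‖P‖ * (Fintype.card (Fin k)) * max ‖u1‖ ‖u2‖ ^ (Fintype.card (Fin k) - 1)
            * ‖u1 - u2‖ := him
        _ ≤ (Real.sqrt n * S) * k * 1 * specNorm D := by
            rw [Fintype.card_fin]
            gcongr
        _ = Real.sqrt n * S * k * specNorm D := by ring
    have hPu2 : ‖P u2‖ ≤ Real.sqrt n * S := by
      have h1 := hPu u2
      have h2 : (∏ t, ‖u2 t‖) = 1 := Finset.prod_eq_one fun t _ => hnorm2 t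
      rwa [h2, mul_one] at h1
    have hsecond : ‖Matrix.toEuclideanCLM (𝕜 := ℝ) Vtᵀ (P u2)
        - Matrix.toEuclideanCLM (𝕜 := ℝ) Vhᵀ (P u2)‖ ≤ specNorm D * (Real.sqrt n * S) :=
      le_trans (hTdiff (P u2)) (mul_le_mul_of_nonneg_left hPu2 hδ0)
    have hfirst : ‖Matrix.toEuclideanCLM (𝕜 := ℝ) Vtᵀ (P u1)
        - Matrix.toEuclideanCLM (𝕜 := ℝ) Vtᵀ (P u2)‖ = ‖P u1 - P u2‖ := by
      rw [← map_sub, clm_norm_map hVtT']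
    have hk2 : ((k : ℝ) + 1) ≤ 2 ^ k := by
      have := Nat.lt_two_pow_self (n := k)
      exact_mod_cast this
    calc ‖Matrix.toEuclideanCLM (𝕜 := ℝ) Vtᵀ (P u1)
          - Matrix.toEuclideanCLM (𝕜 := ℝ) Vhᵀ (P u2)‖
        ≤ ‖Matrix.toEuclideanCLM (𝕜 := ℝ) Vtᵀ (P u1)
            - Matrix.toEuclideanCLM (𝕜 := ℝ) Vtᵀ (P u2)‖
          + ‖Matrix.toEuclideanCLM (𝕜 := ℝ) Vtᵀ (P u2)
            - Matrix.toEuclideanCLM (𝕜 := ℝ) Vhᵀ (P u2)‖ :=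
          norm_sub_le_norm_sub_add_norm_sub _ _ _
      _ ≤ Real.sqrt n * S * k * specNorm D + specNorm D * (Real.sqrt n * S) := by
          rw [hfirst]; exact add_le_add hsub hsecond
      _ = ((k : ℝ) + 1) * (Real.sqrt n * S * specNorm D) := by ring
      _ ≤ 2 ^ k * (Real.sqrt n * S * specNorm D) :=
          mul_le_mul_of_nonneg_right hk2 (mul_nonneg hA0 hδ0)
      _ = 2 ^ k * Real.sqrt n * S * specNorm D := by ring
end
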